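/- If L(X^n; Y^n) = L₁(X^n → Y^n), then p(x^n) = p(x^n || y^{n-1}) for all (x^n, y^n) with p(x^n, y^n) > 0; conversely, if p(x^n) = p(x^n||y^{n-1}) on the support of p, then L(X^n;Y^n) = L₁(X^n→Y^n) = L₂(X^n→Y^n). -/

import Mathlib

open scoped Classical
open Real

noncomputable section

variable {α β : Type} [Fintype α] [DecidableEq α] [Fintype β] [DecidableEq β]

/-- Probability of the event `E` under the joint pmf `p` of `(X^n, Y^n)`. -/
def pr {n : ℕ} (p : (Fin n → α) → (Fin n → β) → ℝ)
    (E : (Fin n → α) → (Fin n → β) → Prop) : ℝ :=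
  ∑ x, ∑ y, if E x y then p x y else 0

/-- `p` is a probability mass function on pairs of sequences. -/
def IsPmf {n : ℕ} (p : (Fin n → α) → (Fin n → β) → ℝ) : Prop :=
  (∀ x y, 0 ≤ p x y) ∧ ∑ x, ∑ y, p x y = 1

/-- The conditional pmf `p(x_i | x^{i-1}, y^{i-d})` evaluated along `(x, y)`. -/
def condX {n : ℕ} (p : (Fin n → α) → (Fin n → β) → ℝ) (d : ℕ) (i : Fin n)
    (x : Fin n → α) (y : Fin n → β) : ℝ :=
  pr p (fun x' y' => (∀ j, j < i → x' j = x j) ∧ x' i = x i ∧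
      ∀ j : Fin n, (j : ℕ) + d ≤ (i : ℕ) → y' j = y j) /
  pr p (fun x' y' => (∀ j, j < i → x' j = x j) ∧
      ∀ j : Fin n, (j : ℕ) + d ≤ (i : ℕ) → y' j = y j)

/-- The conditional pmf `p(y_i | y^{i-1}, x^{i-d})` evaluated along `(x, y)`. -/
def condY {n : ℕ} (p : (Fin n → α) → (Fin n → β) → ℝ) (d : ℕ) (i : Fin n)
    (x : Fin n → α) (y : Fin n → β) : ℝ :=
  pr p (fun x' y' => (∀ j, j < i → y' j = y j) ∧ y' i = y i ∧
      ∀ j : Fin n, (j : ℕ) + d ≤ (i : ℕ) → x' j = x j) /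
  pr p (fun x' y' => (∀ j, j < i → y' j = y j) ∧
      ∀ j : Fin n, (j : ℕ) + d ≤ (i : ℕ) → x' j = x j)

/-- Causally conditioned pmf `p(x^n || y^{n-d}) = ∏ᵢ p(xᵢ | x^{i-1}, y^{i-d})`. -/
def ccX {n : ℕ} (p : (Fin n → α) → (Fin n → β) → ℝ) (d : ℕ)
    (x : Fin n → α) (y : Fin n → β) : ℝ :=
  ∏ i, condX p d i x y

/-- Causally conditioned pmf `p(y^n || x^{n-d}) = ∏ᵢ p(yᵢ | y^{i-1}, x^{i-d})`. -/
def ccY {n : ℕ} (p : (Fin n → α) → (Fin n → β) → ℝ) (d : ℕ)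
    (x : Fin n → α) (y : Fin n → β) : ℝ :=
  ∏ i, condY p d i x y

/-- Marginal pmf of `X^n`. -/
def pX {n : ℕ} (p : (Fin n → α) → (Fin n → β) → ℝ) (x : Fin n → α) : ℝ := ∑ y, p x y

/-- Marginal pmf of `Y^n`. -/
def pY {n : ℕ} (p : (Fin n → α) → (Fin n → β) → ℝ) (y : Fin n → β) : ℝ := ∑ x, p x y

/-- `H(X^n)` in bits. -/
def HX {n : ℕ} (p : (Fin n → α) → (Fin n → β) → ℝ) : ℝ :=
  -(∑ x, ∑ y, p x y * Real.logb 2 (pX p x))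

/-- `H(Y^n)` in bits. -/
def HY {n : ℕ} (p : (Fin n → α) → (Fin n → β) → ℝ) : ℝ :=
  -(∑ x, ∑ y, p x y * Real.logb 2 (pY p y))

/-- Joint entropy `H(X^n, Y^n)` in bits. -/
def Hjoint {n : ℕ} (p : (Fin n → α) → (Fin n → β) → ℝ) : ℝ :=
  -(∑ x, ∑ y, p x y * Real.logb 2 (p x y))

/-- Conditional entropy `H(X_i | X^{i-1}, Y^{i-d})` in bits. -/
def HcondX {n : ℕ} (p : (Fin n → α) → (Fin n → β) → ℝ) (d : ℕ) (i : Fin n) : ℝ :=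
  -(∑ x, ∑ y, p x y * Real.logb 2 (condX p d i x y))

/-- Conditional entropy `H(Y_i | Y^{i-1}, X^{i-d})` in bits. -/
def HcondY {n : ℕ} (p : (Fin n → α) → (Fin n → β) → ℝ) (d : ℕ) (i : Fin n) : ℝ :=
  -(∑ x, ∑ y, p x y * Real.logb 2 (condY p d i x y))

/-- Causally conditional entropy `H(X^n || Y^{n-d}) = Σᵢ H(Xᵢ | X^{i-1}, Y^{i-d})`. -/
def HccX {n : ℕ} (p : (Fin n → α) → (Fin n → β) → ℝ) (d : ℕ) : ℝ := ∑ i, HcondX p d i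

/-- Causally conditional entropy `H(Y^n || X^{n-d})`. -/
def HccY {n : ℕ} (p : (Fin n → α) → (Fin n → β) → ℝ) (d : ℕ) : ℝ := ∑ i, HcondY p d i

/-- Conditional mutual information `I(Y^i; X_i | X^{i-1})`
(as the expectation of `log (p(xᵢ|x^{i-1},y^i) / p(xᵢ|x^{i-1}))`;
note `condX p n` is `p(xᵢ|x^{i-1})`, conditioning on no `y`'s at all). -/
def cmiYX {n : ℕ} (p : (Fin n → α) → (Fin n → β) → ℝ) (i : Fin n) : ℝ :=
  ∑ x, ∑ y, p x y * Real.logb 2 (condX p 0 i x y / condX p n i x y)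

/-- Conditional mutual information `I(X^i; Y_i | Y^{i-1})`. -/
def cmiXY {n : ℕ} (p : (Fin n → α) → (Fin n → β) → ℝ) (i : Fin n) : ℝ :=
  ∑ x, ∑ y, p x y * Real.logb 2 (condY p 0 i x y / condY p n i x y)

/-- Directed information `I(Y^n → X^n) = Σᵢ I(Y^i; X_i | X^{i-1})`. -/
def dirYX {n : ℕ} (p : (Fin n → α) → (Fin n → β) → ℝ) : ℝ := ∑ i, cmiYX p i

/-- Directed information `I(X^n → Y^n) = Σᵢ I(X^i; Y_i | Y^{i-1})`. -/
def dirXY {n : ℕ} (p : (Fin n → α) → (Fin n → β) → ℝ) : ℝ := ∑ i, cmiXY p i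

/-- Directed information `I(Y^{n-1} → X^n) = Σᵢ I(Y^{i-1}; X_i | X^{i-1})`
(the term for `i = 1` vanishes, so we may sum over all `i`). -/
def dirY1X {n : ℕ} (p : (Fin n → α) → (Fin n → β) → ℝ) : ℝ :=
  ∑ i, ∑ x, ∑ y, p x y * Real.logb 2 (condX p 1 i x y / condX p n i x y)

/-- Mutual information `I(X^n; Y^n)` in bits. -/
def miXY {n : ℕ} (p : (Fin n → α) → (Fin n → β) → ℝ) : ℝ :=
  ∑ x, ∑ y, p x y * Real.logb 2 (p x y / (pX p x * pY p y))

/-- Lautum information `L(X^n; Y^n) = Σ p(x^n)p(y^n) log [p(x^n)p(y^n)/p(x^n,y^n)]`. -/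
def lautum {n : ℕ} (p : (Fin n → α) → (Fin n → β) → ℝ) : ℝ :=
  ∑ x, ∑ y, pX p x * pY p y * Real.logb 2 (pX p x * pY p y / p x y)

/-- First-type directed lautum information
`L₁(X^n → Y^n) = Σ p(x^n)p(y^n) log [p(y^n)/p(y^n||x^n)]`. -/
def lautum1XY {n : ℕ} (p : (Fin n → α) → (Fin n → β) → ℝ) : ℝ :=
  ∑ x, ∑ y, pX p x * pY p y * Real.logb 2 (pY p y / ccY p 0 x y)

/-- First-type directed lautum information
`L₁(Y^{n-1} → X^n) = Σ p(x^n)p(y^n) log [p(x^n)/p(x^n||y^{n-1})]`. -/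
def lautum1Y1X {n : ℕ} (p : (Fin n → α) → (Fin n → β) → ℝ) : ℝ :=
  ∑ x, ∑ y, pX p x * pY p y * Real.logb 2 (pX p x / ccX p 1 x y)

/-- Second-type directed lautum information
`L₂(X^n → Y^n) = Σ p(x^n||y^{n-1})p(y^n) log [p(y^n)/p(y^n||x^n)]`. -/
def lautum2XY {n : ℕ} (p : (Fin n → α) → (Fin n → β) → ℝ) : ℝ :=
  ∑ x, ∑ y, ccX p 1 x y * pY p y * Real.logb 2 (pY p y / ccY p 0 x y)

/-!
The chain rule `p(x^n, y^n) = p(x^n||y^{n-1}) p(y^n||x^n)` splits the lautum information as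
`L(X^n;Y^n) = L₁(X^n → Y^n) + L₁(Y^{n-1} → X^n)`. The second term is the relative entropy of
`p(x^n)p(y^n)` with respect to `p(x^n||y^{n-1})p(y^n)`, whose total mass is at most one (not
exactly one: conditionals on null events are `0 / 0 = 0`). By Gibbs' inequality it vanishes
exactly when the two agree wherever `p(x^n)p(y^n) > 0`. Under that condition `L₁` and `L₂` agree
term by term, since moreover `p(x^n||y^{n-1}) = 0` wherever `p(x^n) = 0`.
-/

open InformationTheory

theorem InformationTheory.mul_klFun_div {q r : ℝ} (h : r = 0 → q = 0) :
    r * klFun (q / r) = q * log (q / r) + r - q := by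
  rcases eq_or_ne r 0 with rfl | hr
  · simp [h rfl]
  · rw [klFun_apply]
    field_simp

theorem Real.eq_of_sum_mul_log_div_eq_zero {ι : Type*} [Fintype ι] {q r : ι → ℝ}
    (hq : ∀ i, 0 ≤ q i) (hr : ∀ i, 0 ≤ r i) (hqr : ∀ i, 0 < q i → 0 < r i)
    (hsum : ∑ i, r i ≤ ∑ i, q i) (h : ∑ i, q i * log (q i / r i) = 0) :
    ∀ i, 0 < q i → q i = r i := by
  have hr_zero (i) (hri : r i = 0) : q i = 0 :=
    (hq i).eq_or_lt.elim Eq.symm fun hqi => absurd hri (hqr i hqi).ne'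
  have hkl_nonneg (i) : 0 ≤ r i * klFun (q i / r i) :=
    mul_nonneg (hr i) (klFun_nonneg (div_nonneg (hq i) (hr i)))
  have hkl : ∑ i, r i * klFun (q i / r i) = ∑ i, r i - ∑ i, q i := by
    simp only [mul_klFun_div (hr_zero _), Finset.sum_sub_distrib, Finset.sum_add_distrib, h,
      zero_add]
  have hterm : ∀ i ∈ Finset.univ, r i * klFun (q i / r i) = 0 :=
    (Finset.sum_eq_zero_iff_of_nonneg fun i _ => hkl_nonneg i).mp
      (le_antisymm (hkl ▸ sub_nonpos.mpr hsum) (Finset.sum_nonneg fun i _ => hkl_nonneg i))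
  intro i hqi
  have hri := hqr i hqi
  have hratio : q i / r i = 1 := (klFun_eq_zero_iff (div_nonneg hqi.le hri.le)).mp
    ((mul_eq_zero.mp (hterm i (Finset.mem_univ i))).resolve_left hri.ne')
  exact (div_eq_one_iff_eq hri.ne').mp hratio

theorem Finset.mul_prod_range_div_of_ne_zero {G₀ : Type*} [CommGroupWithZero G₀] {f : ℕ → G₀}
    {n : ℕ} (hf : ∀ i < n, f i ≠ 0) : f 0 * ∏ i ∈ Finset.range n, f (i + 1) / f i = f n := by
  induction n with
  | zero => simp
  | succ n ih =>
    rw [Finset.prod_range_succ, ← mul_assoc, ih fun i hi => hf i (by omega),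
      mul_div_cancel₀ _ (hf n n.lt_add_one)]

theorem Fin.sum_prod_le_one_of_causal {α : Type*} [Fintype α] :
    ∀ {n : ℕ} (f : Fin n → (Fin n → α) → ℝ), (∀ i x, 0 ≤ f i x) →
      (∀ i x x', (∀ j ≤ i, x j = x' j) → f i x = f i x') →
      (∀ i x, ∑ a, f i (Function.update x i a) ≤ 1) → ∑ x, ∏ i, f i x ≤ 1
  | 0, _, _, _, _ => by simp
  | n + 1, f, hf0, hcausal, hsum => by
    rcases isEmpty_or_nonempty α with hα | ⟨⟨a₀⟩⟩
    · simp
    have hhead (a : α) (x : Fin n → α) :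
        f 0 (Fin.cons a x) = f 0 (Function.update (fun _ => a₀) 0 a) :=
      hcausal 0 _ _ fun j hj => by simp [Fin.le_zero_iff.mp hj]
    have htail (a : α) : ∑ x : Fin n → α, ∏ i : Fin n, f i.succ (Fin.cons a x) ≤ 1 := by
      refine Fin.sum_prod_le_one_of_causal (fun i x => f i.succ (Fin.cons a x))
        (fun i x => hf0 _ _) (fun i x x' hxx' => hcausal _ _ _ fun j hj => ?_)
        (fun i x => by simpa only [Fin.cons_update] using hsum i.succ (Fin.cons a x))
      cases j using Fin.cases with
      | zero => rfl
      | succ j => simpa using hxx' j (Fin.succ_le_succ_iff.mp hj)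
    calc ∑ x, ∏ i, f i x
        = ∑ a, f 0 (Function.update (fun _ => a₀) 0 a) *
            ∑ x : Fin n → α, ∏ i : Fin n, f i.succ (Fin.cons a x) := by
          rw [← (Fin.consEquiv fun _ => α).sum_comp, Fintype.sum_prod_type]
          simp only [Fin.consEquiv, Equiv.coe_fn_mk, Fin.prod_univ_succ, hhead,
            Finset.mul_sum]
      _ ≤ ∑ a, f 0 (Function.update (fun _ => a₀) 0 a) :=
          Finset.sum_le_sum fun a _ => mul_le_of_le_one_right (hf0 _ _) (htail a)
      _ ≤ 1 := hsum 0 _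

theorem Fin.forall_val_lt_add_one_iff {n : ℕ} {P : Fin n → Prop} (i : Fin n) :
    (∀ j : Fin n, (j : ℕ) < i + 1 → P j) ↔ (∀ j, j < i → P j) ∧ P i := by
  refine ⟨fun h => ⟨fun j hj => h j (by omega), h i (by omega)⟩, fun ⟨h, hi⟩ j hj => ?_⟩
  rcases Nat.lt_succ_iff_lt_or_eq.mp hj with hlt | heq
  · exact h j hlt
  · exact Fin.ext heq ▸ hi

section Pmf

omit [DecidableEq α] [DecidableEq β]

variable {n : ℕ} {p : (Fin n → α) → (Fin n → β) → ℝ}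

theorem pr_congr {E F : (Fin n → α) → (Fin n → β) → Prop} (h : ∀ x y, E x y ↔ F x y) :
    pr p E = pr p F := by
  simp only [pr, h]

theorem pr_nonneg (hp : ∀ x y, 0 ≤ p x y) (E : (Fin n → α) → (Fin n → β) → Prop) :
    0 ≤ pr p E :=
  Finset.sum_nonneg fun x _ => Finset.sum_nonneg fun y _ => by split_ifs <;> simp [hp x y]

theorem pr_mono (hp : ∀ x y, 0 ≤ p x y) {E F : (Fin n → α) → (Fin n → β) → Prop}
    (h : ∀ x y, E x y → F x y) : pr p E ≤ pr p F :=
  Finset.sum_le_sum fun x _ => Finset.sum_le_sum fun y _ => by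
    by_cases hE : E x y
    · simp [hE, h x y hE]
    · split_ifs <;> simp [hp x y]

theorem sum_pr_and_eq (E : (Fin n → α) → (Fin n → β) → Prop) (i : Fin n) :
    ∑ a, pr p (fun x y => E x y ∧ x i = a) = pr p E := by
  simp only [pr]
  rw [Finset.sum_comm]
  refine Finset.sum_congr rfl fun x _ => ?_
  rw [Finset.sum_comm]
  refine Finset.sum_congr rfl fun y _ => ?_
  by_cases hE : E x y <;> simp [hE]

theorem pX_nonneg (hp : IsPmf p) (x : Fin n → α) : 0 ≤ pX p x :=
  Finset.sum_nonneg fun y _ => hp.1 x y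

theorem pY_nonneg (hp : IsPmf p) (y : Fin n → β) : 0 ≤ pY p y :=
  Finset.sum_nonneg fun x _ => hp.1 x y

theorem le_pX (hp : IsPmf p) (x : Fin n → α) (y : Fin n → β) : p x y ≤ pX p x :=
  Finset.single_le_sum (fun y _ => hp.1 x y) (Finset.mem_univ y)

theorem le_pY (hp : IsPmf p) (x : Fin n → α) (y : Fin n → β) : p x y ≤ pY p y :=
  Finset.single_le_sum (f := fun x => p x y) (fun x _ => hp.1 x y) (Finset.mem_univ x)

variable (p) in
/-- `P(X^k = x^k, Y^l = y^l)`. -/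
def prAgree (x : Fin n → α) (y : Fin n → β) (k l : ℕ) : ℝ :=
  pr p fun x' y' =>
    (∀ j : Fin n, (j : ℕ) < k → x' j = x j) ∧ ∀ j : Fin n, (j : ℕ) < l → y' j = y j

variable {x : Fin n → α} {y : Fin n → β}

theorem prAgree_antitone (hp : ∀ x y, 0 ≤ p x y) {k k' l l' : ℕ} (hk : k ≤ k') (hl : l ≤ l') :
    prAgree p x y k' l' ≤ prAgree p x y k l :=
  pr_mono hp fun _ _ ⟨hx, hy⟩ => ⟨fun j hj => hx j (by omega), fun j hj => hy j (by omega)⟩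

theorem prAgree_zero_zero (hp : IsPmf p) : prAgree p x y 0 0 = 1 := by
  simpa [prAgree, pr] using hp.2

theorem prAgree_self (x : Fin n → α) (y : Fin n → β) : prAgree p x y n n = p x y := by
  simp [prAgree, pr, ← funext_iff, ite_and]

theorem prAgree_zero_right (x : Fin n → α) (y : Fin n → β) : prAgree p x y n 0 = pX p x := by
  simp [prAgree, pr, pX, ← funext_iff]

theorem prAgree_congr_left {x' : Fin n → α} {k : ℕ}
    (h : ∀ j : Fin n, (j : ℕ) < k → x j = x' j) (l : ℕ) : prAgree p x y k l = prAgree p x' y k l :=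
  pr_congr fun x'' _ => and_congr_left' <| forall₂_congr fun j hj => by rw [h j hj]

theorem condX_one_eq (i : Fin n) :
    condX p 1 i x y = prAgree p x y (i + 1) i / prAgree p x y i i := by
  simp only [condX, prAgree, Fin.forall_val_lt_add_one_iff, Nat.add_one_le_iff, Fin.lt_def,
    and_assoc]

theorem condY_zero_eq (i : Fin n) :
    condY p 0 i x y = prAgree p x y (i + 1) (i + 1) / prAgree p x y (i + 1) i := by
  unfold condY prAgree
  congr 1 <;> refine pr_congr fun x' y' => ?_
  · rw [Fin.forall_val_lt_add_one_iff (P := fun j => y' j = y j)]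
    simp only [add_zero, Nat.lt_add_one_iff, Fin.lt_def]
    tauto
  · simp only [add_zero, Nat.lt_add_one_iff, Fin.lt_def]
    tauto

theorem sum_prAgree_update (i : Fin n) :
    ∑ a, prAgree p (Function.update x i a) y (i + 1) i = prAgree p x y i i := by
  rw [prAgree, ← sum_pr_and_eq _ i]
  refine Finset.sum_congr rfl fun a _ => pr_congr fun x' y' => ?_
  rw [Fin.forall_val_lt_add_one_iff (P := fun j => x' j = Function.update x i a j)]
  have hupd : ∀ j, j < i → Function.update x i a j = x j :=
    fun j hj => Function.update_of_ne hj.ne _ _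
  simp +contextual only [Function.update_self, hupd, Fin.lt_def]
  tauto

theorem condX_nonneg (hp : ∀ x y, 0 ≤ p x y) (d : ℕ) (i : Fin n) : 0 ≤ condX p d i x y :=
  div_nonneg (pr_nonneg hp _) (pr_nonneg hp _)

theorem ccX_nonneg (hp : ∀ x y, 0 ≤ p x y) (d : ℕ) : 0 ≤ ccX p d x y :=
  Finset.prod_nonneg fun i _ => condX_nonneg hp d i

theorem ccX_one_mul_ccY_zero (hp : IsPmf p) (x : Fin n → α) (y : Fin n → β) :
    ccX p 1 x y * ccY p 0 x y = p x y := by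
  by_cases hB : ∃ i : Fin n, prAgree p x y (i + 1) i = 0
  · obtain ⟨i, hi⟩ := hB
    have hpxy : p x y = 0 :=
      le_antisymm (prAgree_self (p := p) x y ▸ hi ▸ prAgree_antitone hp.1 i.isLt i.isLt.le)
        (hp.1 x y)
    rw [hpxy, ccX, Finset.prod_eq_zero (Finset.mem_univ i) (by rw [condX_one_eq, hi, zero_div]),
      zero_mul]
  simp only [not_exists] at hB
  have hA (i : ℕ) (hi : i < n) : prAgree p x y i i ≠ 0 :=
    (((pr_nonneg hp.1 _).lt_of_ne (Ne.symm (hB ⟨i, hi⟩))).trans_le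
      (prAgree_antitone hp.1 (Nat.le_succ i) le_rfl)).ne'
  have hstep (i : Fin n) : condX p 1 i x y * condY p 0 i x y =
      prAgree p x y (i + 1) (i + 1) / prAgree p x y i i := by
    rw [condX_one_eq, condY_zero_eq, div_mul_div_comm, mul_comm (prAgree p x y _ i),
      mul_div_mul_right _ _ (hB i)]
  have htel := Finset.mul_prod_range_div_of_ne_zero (f := fun i => prAgree p x y i i) hA
  rw [prAgree_zero_zero hp, one_mul, prAgree_self] at htel
  rw [ccX, ccY, ← Finset.prod_mul_distrib, Finset.prod_congr rfl fun i _ => hstep i,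
    Fin.prod_univ_eq_prod_range (fun i => prAgree p x y (i + 1) (i + 1) / prAgree p x y i i),
    htel]

theorem ccX_one_ne_zero_and_ccY_zero_ne_zero (hp : IsPmf p) (h : p x y ≠ 0) :
    ccX p 1 x y ≠ 0 ∧ ccY p 0 x y ≠ 0 :=
  mul_ne_zero_iff.mp ((ccX_one_mul_ccY_zero hp x y).symm ▸ h)

theorem sum_ccX_one_le_one (hp : ∀ x y, 0 ≤ p x y) (y : Fin n → β) : ∑ x, ccX p 1 x y ≤ 1 := by
  refine Fin.sum_prod_le_one_of_causal (fun i x => condX p 1 i x y)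
    (fun i x => condX_nonneg hp 1 i) (fun i x x' hxx' => ?_) (fun i x => ?_)
  · have hagree : ∀ j : Fin n, (j : ℕ) < i + 1 → x j = x' j :=
      fun j hj => hxx' j (Fin.le_def.mpr (by omega))
    rw [condX_one_eq, condX_one_eq, prAgree_congr_left hagree,
      prAgree_congr_left fun j hj => hagree j (by omega)]
  · have hden (a : α) : prAgree p (Function.update x i a) y i i = prAgree p x y i i :=
      prAgree_congr_left (fun j hj => Function.update_of_ne (Fin.ne_of_lt hj) _ _) _
    simp only [condX_one_eq, hden, ← Finset.sum_div, sum_prAgree_update]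
    exact div_self_le_one _

theorem ccX_one_eq_zero_of_pX_eq_zero (hp : IsPmf p) (hx : pX p x = 0) (y : Fin n → β) :
    ccX p 1 x y = 0 := by
  cases n with
  | zero =>
    have hsum := hp.2
    rw [Fintype.sum_subsingleton _ x] at hsum
    exact absurd (hsum.symm.trans hx) one_ne_zero
  | succ k =>
    refine Finset.prod_eq_zero (Finset.mem_univ (Fin.last k)) ?_
    have hnum : prAgree p x y (k + 1) k = 0 :=
      le_antisymm ((prAgree_antitone hp.1 le_rfl (Nat.zero_le _)).trans_eq
        ((prAgree_zero_right x y).trans hx)) (pr_nonneg hp.1 _)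
    rw [condX_one_eq, Fin.val_last, hnum, zero_div]

theorem lautum_eq_lautum1XY_add_lautum1Y1X (hp : IsPmf p)
    (hsupp : ∀ x y, 0 < pX p x * pY p y → 0 < p x y) :
    lautum p = lautum1XY p + lautum1Y1X p := by
  simp only [lautum, lautum1XY, lautum1Y1X, ← Finset.sum_add_distrib, ← mul_add]
  refine Finset.sum_congr rfl fun x _ => Finset.sum_congr rfl fun y _ => ?_
  rcases eq_or_ne (pX p x * pY p y) 0 with h0 | h0
  · simp [h0]
  obtain ⟨hX, hY⟩ := mul_ne_zero_iff.mp h0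
  obtain ⟨hccX, hccY⟩ := ccX_one_ne_zero_and_ccY_zero_ne_zero hp
    (hsupp x y ((mul_nonneg (pX_nonneg hp x) (pY_nonneg hp y)).lt_of_ne' h0)).ne'
  rw [← ccX_one_mul_ccY_zero hp x y, mul_div_mul_comm,
    Real.logb_mul (div_ne_zero hX hccX) (div_ne_zero hY hccY), add_comm]

theorem lautum1Y1X_eq_sum_mul_log_div :
    lautum1Y1X p = (∑ z : (Fin n → α) × (Fin n → β), pX p z.1 * pY p z.2 *
      Real.log (pX p z.1 * pY p z.2 / (ccX p 1 z.1 z.2 * pY p z.2))) / Real.log 2 := by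
  rw [Fintype.sum_prod_type, lautum1Y1X, Finset.sum_div]
  refine Finset.sum_congr rfl fun x _ => ?_
  rw [Finset.sum_div]
  refine Finset.sum_congr rfl fun y _ => ?_
  rcases eq_or_ne (pY p y) 0 with hY | hY
  · simp [hY]
  · rw [mul_div_mul_right _ _ hY, Real.logb, mul_div_assoc]

theorem sum_ccX_one_mul_pY_le_sum_pX_mul_pY (hp : IsPmf p) :
    ∑ z : (Fin n → α) × (Fin n → β), ccX p 1 z.1 z.2 * pY p z.2
      ≤ ∑ z : (Fin n → α) × (Fin n → β), pX p z.1 * pY p z.2 := by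
  rw [Fintype.sum_prod_type, Fintype.sum_prod_type, Finset.sum_comm, ← Finset.sum_mul_sum,
    show ∑ x, pX p x = 1 from hp.2, one_mul]
  simp only [← Finset.sum_mul]
  exact Finset.sum_le_sum fun y _ =>
    mul_le_of_le_one_left (pY_nonneg hp y) (sum_ccX_one_le_one hp.1 y)

theorem lautum1Y1X_eq_zero_iff (hp : IsPmf p) (hsupp : ∀ x y, 0 < pX p x * pY p y → 0 < p x y) :
    lautum1Y1X p = 0 ↔ ∀ x y, 0 < p x y → pX p x = ccX p 1 x y := by
  constructor
  · intro h x y hxy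
    have hY := hxy.trans_le (le_pY hp x y)
    have hq (z : (Fin n → α) × (Fin n → β)) : 0 ≤ pX p z.1 * pY p z.2 :=
      mul_nonneg (pX_nonneg hp _) (pY_nonneg hp _)
    have hr (z : (Fin n → α) × (Fin n → β)) : 0 ≤ ccX p 1 z.1 z.2 * pY p z.2 :=
      mul_nonneg (ccX_nonneg hp.1 1) (pY_nonneg hp _)
    have hqr (z : (Fin n → α) × (Fin n → β)) (hz : 0 < pX p z.1 * pY p z.2) :
        0 < ccX p 1 z.1 z.2 * pY p z.2 :=
      (hr z).lt_of_ne' (mul_ne_zero (ccX_one_ne_zero_and_ccY_zero_ne_zero hp (hsupp _ _ hz).ne').1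
        (right_ne_zero_of_mul hz.ne'))
    have hlog := (div_eq_zero_iff.mp (lautum1Y1X_eq_sum_mul_log_div.symm.trans h)).resolve_right
      (Real.log_pos one_lt_two).ne'
    have hX := hxy.trans_le (le_pX hp x y)
    exact mul_right_cancel₀ hY.ne' <| Real.eq_of_sum_mul_log_div_eq_zero hq hr hqr
      (sum_ccX_one_mul_pY_le_sum_pX_mul_pY hp) hlog (x, y) (mul_pos hX hY)
  · intro h
    refine Finset.sum_eq_zero fun x _ => Finset.sum_eq_zero fun y _ => ?_
    rcases (hp.1 x y).eq_or_lt with h0 | hpos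
    · have hXY : pX p x * pY p y = 0 := by
        by_contra hne
        exact (hsupp x y ((mul_nonneg (pX_nonneg hp x) (pY_nonneg hp y)).lt_of_ne' hne)).ne h0
      rw [hXY, zero_mul]
    · rw [← h x y hpos, div_self (hpos.trans_le (le_pX hp x y)).ne', Real.logb_one, mul_zero]

theorem lautum1XY_eq_lautum2XY (hp : IsPmf p) (hsupp : ∀ x y, 0 < pX p x * pY p y → 0 < p x y)
    (h : ∀ x y, 0 < p x y → pX p x = ccX p 1 x y) : lautum1XY p = lautum2XY p := by
  refine Finset.sum_congr rfl fun x _ => Finset.sum_congr rfl fun y _ => ?_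
  rcases (pY_nonneg hp y).eq_or_lt with hY | hY
  · simp [← hY]
  rcases (pX_nonneg hp x).eq_or_lt with hX | hX
  · rw [← hX, ccX_one_eq_zero_of_pX_eq_zero hp hX.symm]
  · rw [h x y (hsupp x y (mul_pos hX hY))]

end Pmf

/-- if `L(X^n;Y^n) = L₁(X^n → Y^n)` then `p(x^n) = p(x^n||y^{n-1})`
on the support of `p`; conversely, if `p(x^n) = p(x^n||y^{n-1})` on the support of
`p`, then `L(X^n;Y^n) = L₁(X^n→Y^n) = L₂(X^n→Y^n)`. -/
theorem lautum_equality_condition {n : ℕ}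
    (p : (Fin n → α) → (Fin n → β) → ℝ) (hp : IsPmf p)
    (hsupp : ∀ x y, 0 < pX p x * pY p y → 0 < p x y) :
    (lautum p = lautum1XY p →
      ∀ x y, 0 < p x y → pX p x = ccX p 1 x y) ∧
    ((∀ x y, 0 < p x y → pX p x = ccX p 1 x y) →
      lautum p = lautum1XY p ∧ lautum1XY p = lautum2XY p) := by
  have hdecomp := lautum_eq_lautum1XY_add_lautum1Y1X hp hsupp
  have hzero := lautum1Y1X_eq_zero_iff hp hsupp
  refine ⟨fun hL => hzero.mp (by linarith), fun h => ⟨?_, lautum1XY_eq_lautum2XY hp hsupp h⟩⟩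
  rw [hdecomp, hzero.mpr h, add_zero]
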